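/- arXiv:1303.4025 — 4 statements merged into one kernel-verified Lean document; each statement's English description precedes it below -/
import Mathlib

section
/- Let G be the graph consisting of a 4-cycle with edges b, c, d, e (in cyclic order b, c, d, e) together with a pendant edge a attached at the vertex shared by b and e. Let L assign at least 2 colors to each edge, and suppose either |L(b)| ≥ 3 or L(b) ≠ L(a). Then G is L-edge-colorable. -/
/-- From a list with at least 2 colors we can avoid any single color. -/
lemma pick1 {S : Finset ℕ} (h : 2 ≤ S.card) (x : ℕ) : ∃ s ∈ S, s ≠ x := by
  by_contra hcon
  push_neg at hcon
  have hsub : S ⊆ {x} := fun s hs => Finset.mem_singleton.2 (hcon s hs)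
  have := Finset.card_le_card hsub
  simp only [Finset.card_singleton] at this
  omega

/-- From a list with at least 2 colors, either we can avoid two given colors, or the
list is exactly that pair. -/
lemma pick2 {S : Finset ℕ} (h : 2 ≤ S.card) (x y : ℕ) :
    (∃ s ∈ S, s ≠ x ∧ s ≠ y) ∨ (x ∈ S ∧ y ∈ S ∧ x ≠ y) := by
  by_cases hcon : ∃ s ∈ S, s ≠ x ∧ s ≠ y
  · exact Or.inl hcon
  push_neg at hcon
  have hsub : S ⊆ {x, y} := by
    intro s hs
    rcases eq_or_ne s x with h1 | h1
    · simp [h1]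
    · simp [hcon s hs h1]
  have hS : S = {x, y} := by
    apply Finset.eq_of_subset_of_card_le hsub
    calc ({x, y} : Finset ℕ).card ≤ ({y} : Finset ℕ).card + 1 := Finset.card_insert_le _ _
      _ ≤ 2 := by simp
      _ ≤ S.card := h
  have hxy : x ≠ y := by
    rintro rfl
    rw [hS] at h
    simp at h
  refine Or.inr ⟨?_, ?_, hxy⟩ <;> simp [hS]

/-- From a list with at least 3 colors, either we can avoid three given colors, or the
list is exactly that (pairwise distinct) triple. -/
lemma pick3 {S : Finset ℕ} (h : 3 ≤ S.card) (x y z : ℕ) :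
    (∃ s ∈ S, s ≠ x ∧ s ≠ y ∧ s ≠ z) ∨
      (x ∈ S ∧ y ∈ S ∧ z ∈ S ∧ x ≠ y ∧ x ≠ z ∧ y ≠ z) := by
  by_cases hcon : ∃ s ∈ S, s ≠ x ∧ s ≠ y ∧ s ≠ z
  · exact Or.inl hcon
  push_neg at hcon
  have hsub : S ⊆ {x, y, z} := by
    intro s hs
    rcases eq_or_ne s x with h1 | h1
    · simp [h1]
    rcases eq_or_ne s y with h2 | h2
    · simp [h2]
    · simp [hcon s hs h1 h2]
  have hS : S = {x, y, z} := by
    apply Finset.eq_of_subset_of_card_le hsub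
    calc ({x, y, z} : Finset ℕ).card ≤ ({y, z} : Finset ℕ).card + 1 :=
          Finset.card_insert_le _ _
      _ ≤ (({z} : Finset ℕ).card + 1) + 1 := by
          exact Nat.add_le_add_right (Finset.card_insert_le _ _) 1
      _ ≤ 3 := by simp
      _ ≤ S.card := h
  have hxy : x ≠ y := by
    rintro rfl
    rw [hS] at h
    have : ({x, x, z} : Finset ℕ).card ≤ 2 := by
      rw [Finset.insert_idem]
      calc ({x, z} : Finset ℕ).card ≤ ({z} : Finset ℕ).card + 1 := Finset.card_insert_le _ _
        _ ≤ 2 := by simp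
    omega
  have hxz : x ≠ z := by
    rintro rfl
    rw [hS] at h
    have : ({x, y, x} : Finset ℕ).card ≤ 2 := by
      have : ({x, y, x} : Finset ℕ) = {x, y} := by
        ext t; simp; tauto
      rw [this]
      calc ({x, y} : Finset ℕ).card ≤ ({y} : Finset ℕ).card + 1 := Finset.card_insert_le _ _
        _ ≤ 2 := by simp
    omega
  have hyz : y ≠ z := by
    rintro rfl
    rw [hS] at h
    have : ({x, y, y} : Finset ℕ).card ≤ 2 := by
      have : ({x, y, y} : Finset ℕ) = {x, y} := by
        ext t; simp
      rw [this]
      calc ({x, y} : Finset ℕ).card ≤ ({y} : Finset ℕ).card + 1 := Finset.card_insert_le _ _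
        _ ≤ 2 := by simp
    omega
  refine Or.inr ⟨?_, ?_, ?_, hxy, hxz, hyz⟩ <;> simp [hS]

/-- The graph of Lemma 2 of the paper: a 4-cycle with edges `b, c, d, e` (in this cyclic
order) plus a pendant edge `a` attached at the vertex shared by `b` and `e`.
The incident pairs of edges are: a–b, a–e, b–c, c–d, d–e, e–b.  If every list has at least
2 colors and either `|L b| ≥ 3` or `L b ≠ L a`, the graph is `L`-edge-colorable. -/
theorem pendant_four_cycle_list_colorable (La Lb Lc Ld Le : Finset ℕ)
    (ha : 2 ≤ La.card) (hb : 2 ≤ Lb.card) (hc : 2 ≤ Lc.card) (hd : 2 ≤ Ld.card)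
    (he : 2 ≤ Le.card) (hkey : 3 ≤ Lb.card ∨ Lb ≠ La) :
    ∃ a ∈ La, ∃ b ∈ Lb, ∃ c ∈ Lc, ∃ d ∈ Ld, ∃ e ∈ Le,
      a ≠ b ∧ a ≠ e ∧ b ≠ c ∧ c ≠ d ∧ d ≠ e ∧ e ≠ b := by
  rcases hkey with h3 | hne
  · -- Case |Lb| ≥ 3
    obtain ⟨e1, he1, -⟩ := pick1 he 0
    obtain ⟨d1, hd1, hd1e⟩ := pick1 hd e1
    obtain ⟨c1, hc1, hc1d⟩ := pick1 hc d1
    obtain ⟨a1, ha1, ha1e⟩ := pick1 ha e1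
    rcases pick3 h3 a1 c1 e1 with ⟨b1, hb1, hba, hbc, hbe⟩ |
      ⟨haLb, hcLb, heLb, hac, hae, hce⟩
    · exact ⟨a1, ha1, b1, hb1, c1, hc1, d1, hd1, e1, he1,
        hba.symm, ha1e, hbc, hc1d, hd1e, hbe.symm⟩
    -- Lb = {a1, c1, e1}, pairwise distinct
    rcases pick2 ha e1 a1 with ⟨a2, ha2, ha2e, ha2a⟩ | ⟨heLa, haLa, hea⟩
    · exact ⟨a2, ha2, a1, haLb, c1, hc1, d1, hd1, e1, he1,
        ha2a, ha2e, hac, hc1d, hd1e, hae.symm⟩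
    -- La = {e1, a1}
    rcases pick2 hc d1 c1 with ⟨c2, hc2, hc2d, hc2c⟩ | ⟨hdLc, hcLc, hdc⟩
    · exact ⟨a1, ha1, c1, hcLb, c2, hc2, d1, hd1, e1, he1,
        hac, ha1e, hc2c.symm, hc2d, hd1e, hce.symm⟩
    -- Lc = {d1, c1}
    rcases pick2 hd e1 d1 with ⟨d2, hd2, hd2e, hd2d⟩ | ⟨heLd, hdLd, hed⟩
    · exact ⟨a1, ha1, c1, hcLb, d1, hdLc, d2, hd2, e1, he1,
        hac, ha1e, hc1d, hd2d.symm, hd2e, hce.symm⟩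
    -- Ld = {e1, d1}
    obtain ⟨e2, he2, he2e⟩ := pick1 he e1
    rcases eq_or_ne e2 a1 with heq | hna
    · -- e2 = a1
      exact ⟨e1, heLa, c1, hcLb, d1, hdLc, e1, heLd, a1, heq ▸ he2,
        hce.symm, hea, hc1d, hed.symm, hea, hac⟩
    rcases eq_or_ne e2 c1 with heq | hnc
    · -- e2 = c1
      exact ⟨a1, ha1, e1, heLb, c1, hc1, d1, hd1, c1, heq ▸ he2,
        hae, hac, hce.symm, hc1d, hdc, hce⟩
    · -- e2 ∉ {a1, c1}
      exact ⟨a1, ha1, e1, heLb, c1, hc1, e1, heLd, e2, he2,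
        hae, hna.symm, hce.symm, hce, he2e.symm, he2e⟩
  · -- Case Lb ≠ La
    have hwit : ∃ x, (x ∈ Lb ∧ x ∉ La) ∨ (x ∈ La ∧ x ∉ Lb) := by
      by_contra hx
      push_neg at hx
      apply hne
      ext t
      exact ⟨fun ht => (hx t).1 ht, fun ht => (hx t).2 ht⟩
    obtain ⟨β, ⟨hβb, hβa⟩ | ⟨hαa, hαb⟩⟩ := hwit
    · -- β ∈ Lb \ La
      obtain ⟨e1, he1, he1β⟩ := pick1 he β
      obtain ⟨c1, hc1, hc1β⟩ := pick1 hc β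
      rcases pick2 hd c1 e1 with ⟨d1, hd1, hd1c, hd1e⟩ | ⟨hcLd, heLd, hce'⟩
      · obtain ⟨a1, ha1, ha1e⟩ := pick1 ha e1
        exact ⟨a1, ha1, β, hβb, c1, hc1, d1, hd1, e1, he1,
          ne_of_mem_of_not_mem ha1 hβa, ha1e, hc1β.symm, hd1c.symm, hd1e, he1β⟩
      -- Ld = {c1, e1}
      rcases pick2 hc β c1 with ⟨c2, hc2, hc2β, hc2c⟩ | ⟨hβLc, hcLc, hβc⟩
      · obtain ⟨a1, ha1, ha1e⟩ := pick1 ha e1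
        exact ⟨a1, ha1, β, hβb, c2, hc2, c1, hcLd, e1, he1,
          ne_of_mem_of_not_mem ha1 hβa, ha1e, hc2β.symm, hc2c, hce', he1β⟩
      -- Lc = {β, c1}
      rcases pick2 he β e1 with ⟨e2, he2, he2β, he2e⟩ | ⟨hβLe, heLe, hβe⟩
      · obtain ⟨a1, ha1, ha1e⟩ := pick1 ha e2
        exact ⟨a1, ha1, β, hβb, c1, hc1, e1, heLd, e2, he2,
          ne_of_mem_of_not_mem ha1 hβa, ha1e, hβc, hce', he2e.symm, he2β⟩
      -- Le = {β, e1}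
      obtain ⟨b2, hb2, hb2β⟩ := pick1 hb β
      obtain ⟨a1, ha1, ha1b⟩ := pick1 ha b2
      exact ⟨a1, ha1, b2, hb2, β, hβLc, c1, hcLd, β, hβLe,
        ha1b, ne_of_mem_of_not_mem ha1 hβa, hb2β, hβc, hβc.symm, hb2β.symm⟩
    · -- α ∈ La \ Lb  (here β is named α in the plan; rename)
      obtain ⟨e1, he1, he1α⟩ := pick1 he β
      obtain ⟨b1, hb1, hb1e⟩ := pick1 hb e1
      obtain ⟨c1, hc1, hc1b⟩ := pick1 hc b1
      rcases pick2 hd c1 e1 with ⟨d1, hd1, hd1c, hd1e⟩ | ⟨hcLd, heLd, hce'⟩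
      · exact ⟨β, hαa, b1, hb1, c1, hc1, d1, hd1, e1, he1,
          (ne_of_mem_of_not_mem hb1 hαb).symm, he1α.symm, hc1b.symm, hd1c.symm, hd1e, hb1e.symm⟩
      -- Ld = {c1, e1}
      rcases pick2 hc b1 c1 with ⟨c2, hc2, hc2b, hc2c⟩ | ⟨hbLc, hcLc, hbc'⟩
      · exact ⟨β, hαa, b1, hb1, c2, hc2, c1, hcLd, e1, he1,
          (ne_of_mem_of_not_mem hb1 hαb).symm, he1α.symm, hc2b.symm, hc2c, hce', hb1e.symm⟩
      -- Lc = {b1, c1}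
      rcases pick2 hb e1 b1 with ⟨b2, hb2, hb2e, hb2b⟩ | ⟨heLb, hbLb, heb⟩
      · exact ⟨β, hαa, b2, hb2, b1, hbLc, c1, hcLd, e1, he1,
          (ne_of_mem_of_not_mem hb2 hαb).symm, he1α.symm, hb2b, hbc', hce', hb2e.symm⟩
      -- Lb = {e1, b1}
      rcases pick2 he β e1 with ⟨e2, he2, he2α, he2e⟩ | ⟨hαLe, heLe, hαe⟩
      · rcases eq_or_ne e2 b1 with heq | hne2
        · exact ⟨β, hαa, e1, heLb, c1, hc1, e1, heLd, b1, heq ▸ he2,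
            he1α.symm, (ne_of_mem_of_not_mem hb1 hαb).symm, hce'.symm, hce', heb, heb.symm⟩
        · exact ⟨β, hαa, b1, hb1, c1, hc1, e1, heLd, e2, he2,
            (ne_of_mem_of_not_mem hb1 hαb).symm, he2α.symm, hc1b.symm, hce', he2e.symm, hne2⟩
      -- Le = {α, e1}
      obtain ⟨a2, ha2, ha2α⟩ := pick1 ha β
      rcases eq_or_ne a2 b1 with heq | hne2
      · exact ⟨b1, heq ▸ ha2, e1, heLb, c1, hc1, e1, heLd, β, hαLe,
          heb.symm, ne_of_mem_of_not_mem hb1 hαb, hce'.symm, hce', hαe.symm, hαe⟩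
      · exact ⟨a2, ha2, b1, hb1, c1, hc1, e1, heLd, β, hαLe,
          hne2, ha2α, hc1b.symm, hce', hαe.symm, (ne_of_mem_of_not_mem hb1 hαb).symm⟩
end

section
/- Let G be a simple graph with maximum degree Δ ≤ 8 containing a 4-cycle u, v, w, x with deg(u) = deg(w) = 3. If the graph obtained from G by deleting the four cycle edges uv, vw, wx, xu is 9-edge-choosable (with the original lists), then G is 9-edge-choosable. -/
def EdgeListColorable {V : Type*} (G : SimpleGraph V) (L : Sym2 V → Finset ℕ) : Prop :=
  ∃ c : Sym2 V → ℕ, (∀ e ∈ G.edgeSet, c e ∈ L e) ∧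
    ∀ e₁ ∈ G.edgeSet, ∀ e₂ ∈ G.edgeSet, e₁ ≠ e₂ → (∃ x, x ∈ e₁ ∧ x ∈ e₂) → c e₁ ≠ c e₂

lemma greedy4 {A B C D : Finset ℕ} (hB : 2 ≤ B.card) (hC : 2 ≤ C.card) (hD : 2 ≤ D.card)
    {t : ℕ} (htA : t ∈ A) (htD : t ∉ D) :
    ∃ a ∈ A, ∃ b ∈ B, ∃ c ∈ C, ∃ d ∈ D, a ≠ b ∧ b ≠ c ∧ c ≠ d ∧ d ≠ a := by
  obtain ⟨b, hb, hbt⟩ := Finset.exists_mem_ne (s := B) (by omega) t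
  obtain ⟨c, hc, hcb⟩ := Finset.exists_mem_ne (s := C) (by omega) b
  obtain ⟨d, hd, hdc⟩ := Finset.exists_mem_ne (s := D) (by omega) c
  exact ⟨t, htA, b, hb, c, hc, d, hd, hbt.symm, hcb.symm, hdc.symm, fun h => htD (h ▸ hd)⟩

lemma finset_ne_cases {A B : Finset ℕ} (h : A ≠ B) :
    (∃ t, t ∈ A ∧ t ∉ B) ∨ (∃ t, t ∈ B ∧ t ∉ A) := by
  by_contra hc
  push_neg at hc
  exact h (Finset.ext fun t => ⟨hc.1 t, hc.2 t⟩)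

lemma cycle4 {A B C D : Finset ℕ} (hA : 2 ≤ A.card) (hB : 2 ≤ B.card)
    (hC : 2 ≤ C.card) (hD : 2 ≤ D.card) :
    ∃ a ∈ A, ∃ b ∈ B, ∃ c ∈ C, ∃ d ∈ D, a ≠ b ∧ b ≠ c ∧ c ≠ d ∧ d ≠ a := by
  by_cases h1 : A = B
  · by_cases h2 : B = C
    · by_cases h3 : C = D
      · obtain ⟨p, hp, q, hq, hpq⟩ := Finset.one_lt_card.mp (by omega : 1 < A.card)
        exact ⟨p, hp, q, h1 ▸ hq, p, (h1.trans h2) ▸ hp, q, (h1.trans (h2.trans h3)) ▸ hq,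
          hpq, Ne.symm hpq, hpq, Ne.symm hpq⟩
      · rcases finset_ne_cases h3 with ⟨t, ht, ht'⟩ | ⟨t, ht, ht'⟩
        · obtain ⟨a', ha', b', hb', c', hc', d', hd', g1, g2, g3, g4⟩ :=
            greedy4 (A := C) (B := B) (C := A) (D := D) hB hA hD ht ht'
          exact ⟨c', hc', b', hb', a', ha', d', hd', g2.symm, g1.symm, g4.symm, g3.symm⟩
        · obtain ⟨a', ha', b', hb', c', hc', d', hd', g1, g2, g3, g4⟩ :=
            greedy4 (A := D) (B := A) (C := B) (D := C) hA hB hC ht ht'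
          exact ⟨b', hb', c', hc', d', hd', a', ha', g2, g3, g4, g1⟩
    · rcases finset_ne_cases h2 with ⟨t, ht, ht'⟩ | ⟨t, ht, ht'⟩
      · obtain ⟨a', ha', b', hb', c', hc', d', hd', g1, g2, g3, g4⟩ :=
          greedy4 (A := B) (B := A) (C := D) (D := C) hA hD hC ht ht'
        exact ⟨b', hb', a', ha', d', hd', c', hc', g1.symm, g4.symm, g3.symm, g2.symm⟩
      · obtain ⟨a', ha', b', hb', c', hc', d', hd', g1, g2, g3, g4⟩ :=
          greedy4 (A := C) (B := D) (C := A) (D := B) hD hA hB ht ht'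
        exact ⟨c', hc', d', hd', a', ha', b', hb', g3, g4, g1, g2⟩
  · rcases finset_ne_cases h1 with ⟨t, ht, ht'⟩ | ⟨t, ht, ht'⟩
    · obtain ⟨a', ha', b', hb', c', hc', d', hd', g1, g2, g3, g4⟩ :=
        greedy4 (A := A) (B := D) (C := C) (D := B) hD hC hB ht ht'
      exact ⟨a', ha', d', hd', c', hc', b', hb', g4.symm, g3.symm, g2.symm, g1.symm⟩
    · obtain ⟨a', ha', b', hb', c', hc', d', hd', g1, g2, g3, g4⟩ :=
        greedy4 (A := B) (B := C) (C := D) (D := A) hC hD hA ht ht'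
      exact ⟨d', hd', a', ha', b', hb', c', hc', g4, g1, g2, g3⟩

/-- Configuration (C₂): `G` has maximum degree at most 8 and contains a 4-cycle `u v w x`
with `deg u = deg w = 3`.  For any assignment of lists of at least 9 colors to the edges,
if `G` minus the four cycle edges is colorable from the lists, then so is `G`. -/
theorem extend_coloring_config_C2 {V : Type*} [Fintype V] (G : SimpleGraph V)
    [DecidableRel G.Adj] (hΔ : ∀ y, G.degree y ≤ 8)
    (u v w x : V) (huv : G.Adj u v) (hvw : G.Adj v w) (hwx : G.Adj w x) (hxu : G.Adj x u)
    (huw : u ≠ w) (hvx : v ≠ x)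
    (hdu : G.degree u = 3) (hdw : G.degree w = 3)
    (L : Sym2 V → Finset ℕ) (hL : ∀ e ∈ G.edgeSet, 9 ≤ (L e).card)
    (h : EdgeListColorable
      (G.deleteEdges {s(u, v), s(v, w), s(w, x), s(x, u)}) L) :
    EdgeListColorable G L := by
  classical
  obtain ⟨c, hc1, hc2⟩ := h
  have huv' : u ≠ v := huv.ne
  have hvw' : v ≠ w := hvw.ne
  have hwx' : w ≠ x := hwx.ne
  have hxu' : x ≠ u := hxu.ne
  -- distinctness of the four cycle edges
  have e12 : s(u, v) ≠ s(v, w) := by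
    intro h'; rcases Sym2.eq_iff.mp h' with ⟨h₁, _⟩ | ⟨h₁, _⟩
    · exact huv' h₁
    · exact huw h₁
  have e13 : s(u, v) ≠ s(w, x) := by
    intro h'; rcases Sym2.eq_iff.mp h' with ⟨h₁, _⟩ | ⟨h₁, _⟩
    · exact huw h₁
    · exact hxu' h₁.symm
  have e14 : s(u, v) ≠ s(x, u) := by
    intro h'; rcases Sym2.eq_iff.mp h' with ⟨h₁, _⟩ | ⟨_, h₂⟩
    · exact hxu' h₁.symm
    · exact hvx h₂
  have e23 : s(v, w) ≠ s(w, x) := by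
    intro h'; rcases Sym2.eq_iff.mp h' with ⟨h₁, _⟩ | ⟨h₁, _⟩
    · exact hvw' h₁
    · exact hvx h₁
  have e24 : s(v, w) ≠ s(x, u) := by
    intro h'; rcases Sym2.eq_iff.mp h' with ⟨h₁, _⟩ | ⟨_, h₂⟩
    · exact hvx h₁
    · exact hwx' h₂
  have e34 : s(w, x) ≠ s(x, u) := by
    intro h'; rcases Sym2.eq_iff.mp h' with ⟨h₁, _⟩ | ⟨h₁, _⟩
    · exact hwx' h₁
    · exact huw h₁.symm
  -- edge memberships
  have m1 : s(u, v) ∈ G.edgeSet := G.mem_edgeSet.mpr huv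
  have m2 : s(v, w) ∈ G.edgeSet := G.mem_edgeSet.mpr hvw
  have m3 : s(w, x) ∈ G.edgeSet := G.mem_edgeSet.mpr hwx
  have m4 : s(x, u) ∈ G.edgeSet := G.mem_edgeSet.mpr hxu
  -- incidence memberships
  have mem_inc : ∀ (p : V) (e : Sym2 V), e ∈ G.edgeSet → p ∈ e → e ∈ G.incidenceFinset p := by
    intro p e he hp
    rw [SimpleGraph.mem_incidenceFinset]
    exact ⟨he, hp⟩
  have iu1 : s(u, v) ∈ G.incidenceFinset u := mem_inc _ _ m1 (by simp)
  have iu4 : s(x, u) ∈ G.incidenceFinset u := mem_inc _ _ m4 (by simp)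
  have iv1 : s(u, v) ∈ G.incidenceFinset v := mem_inc _ _ m1 (by simp)
  have iv2 : s(v, w) ∈ G.incidenceFinset v := mem_inc _ _ m2 (by simp)
  have iw2 : s(v, w) ∈ G.incidenceFinset w := mem_inc _ _ m2 (by simp)
  have iw3 : s(w, x) ∈ G.incidenceFinset w := mem_inc _ _ m3 (by simp)
  have ix3 : s(w, x) ∈ G.incidenceFinset x := mem_inc _ _ m3 (by simp)
  have ix4 : s(x, u) ∈ G.incidenceFinset x := mem_inc _ _ m4 (by simp)
  -- forbidden-edge finsets
  set Fu : Finset (Sym2 V) := G.incidenceFinset u \ {s(u, v), s(x, u)} with hFudef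
  set Fv : Finset (Sym2 V) := G.incidenceFinset v \ {s(u, v), s(v, w)} with hFvdef
  set Fw : Finset (Sym2 V) := G.incidenceFinset w \ {s(v, w), s(w, x)} with hFwdef
  set Fx : Finset (Sym2 V) := G.incidenceFinset x \ {s(w, x), s(x, u)} with hFxdef
  have cardFu : Fu.card ≤ 1 := by
    have hsub : ({s(u, v), s(x, u)} : Finset (Sym2 V)) ⊆ G.incidenceFinset u := by
      intro e he
      rcases Finset.mem_insert.mp he with rfl | he
      · exact iu1
      · exact Finset.mem_singleton.mp he ▸ iu4
    have hpair : ({s(u, v), s(x, u)} : Finset (Sym2 V)).card = 2 := by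
      rw [Finset.card_insert_of_notMem (by simp [e14]), Finset.card_singleton]
    rw [hFudef, Finset.card_sdiff_of_subset hsub, hpair, G.card_incidenceFinset_eq_degree, hdu]
  have cardFw : Fw.card ≤ 1 := by
    have hsub : ({s(v, w), s(w, x)} : Finset (Sym2 V)) ⊆ G.incidenceFinset w := by
      intro e he
      rcases Finset.mem_insert.mp he with rfl | he
      · exact iw2
      · exact Finset.mem_singleton.mp he ▸ iw3
    have hpair : ({s(v, w), s(w, x)} : Finset (Sym2 V)).card = 2 := by
      rw [Finset.card_insert_of_notMem (by simp [e23]), Finset.card_singleton]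
    rw [hFwdef, Finset.card_sdiff_of_subset hsub, hpair, G.card_incidenceFinset_eq_degree, hdw]
  have cardFv : Fv.card ≤ 6 := by
    have hsub : ({s(u, v), s(v, w)} : Finset (Sym2 V)) ⊆ G.incidenceFinset v := by
      intro e he
      rcases Finset.mem_insert.mp he with rfl | he
      · exact iv1
      · exact Finset.mem_singleton.mp he ▸ iv2
    have hpair : ({s(u, v), s(v, w)} : Finset (Sym2 V)).card = 2 := by
      rw [Finset.card_insert_of_notMem (by simp [e12]), Finset.card_singleton]
    have := hΔ v
    rw [hFvdef, Finset.card_sdiff_of_subset hsub, hpair, G.card_incidenceFinset_eq_degree]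
    omega
  have cardFx : Fx.card ≤ 6 := by
    have hsub : ({s(w, x), s(x, u)} : Finset (Sym2 V)) ⊆ G.incidenceFinset x := by
      intro e he
      rcases Finset.mem_insert.mp he with rfl | he
      · exact ix3
      · exact Finset.mem_singleton.mp he ▸ ix4
    have hpair : ({s(w, x), s(x, u)} : Finset (Sym2 V)).card = 2 := by
      rw [Finset.card_insert_of_notMem (by simp [e34]), Finset.card_singleton]
    have := hΔ x
    rw [hFxdef, Finset.card_sdiff_of_subset hsub, hpair, G.card_incidenceFinset_eq_degree]
    omega
  -- available color sets
  set A1 : Finset ℕ := L s(u, v) \ (Fu ∪ Fv).image c with hA1def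
  set A2 : Finset ℕ := L s(v, w) \ (Fv ∪ Fw).image c with hA2def
  set A3 : Finset ℕ := L s(w, x) \ (Fw ∪ Fx).image c with hA3def
  set A4 : Finset ℕ := L s(x, u) \ (Fx ∪ Fu).image c with hA4def
  have cardA : ∀ (e : Sym2 V) (F F' : Finset (Sym2 V)), e ∈ G.edgeSet → F.card ≤ 1 →
      F'.card ≤ 6 → 2 ≤ (L e \ (F ∪ F').image c).card := by
    intro e F F' he h1 h6
    have h9 := hL e he
    have himg : ((F ∪ F').image c).card ≤ 7 :=
      le_trans (Finset.card_image_le) (le_trans (Finset.card_union_le _ _) (by omega))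
    have := Finset.le_card_sdiff ((F ∪ F').image c) (L e)
    omega
  have hA1 : 2 ≤ A1.card := cardA _ Fu Fv m1 cardFu cardFv
  have hA2 : 2 ≤ A2.card := by
    rw [hA2def, Finset.union_comm]; exact cardA _ Fw Fv m2 cardFw cardFv
  have hA3 : 2 ≤ A3.card := cardA _ Fw Fx m3 cardFw cardFx
  have hA4 : 2 ≤ A4.card := by
    rw [hA4def, Finset.union_comm]; exact cardA _ Fu Fx m4 cardFu cardFx
  obtain ⟨a1, ha1, a2, ha2, a3, ha3, a4, ha4, g12, g23, g34, g41⟩ := cycle4 hA1 hA2 hA3 hA4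
  obtain ⟨ha1L, ha1F⟩ := Finset.mem_sdiff.mp ha1
  obtain ⟨ha2L, ha2F⟩ := Finset.mem_sdiff.mp ha2
  obtain ⟨ha3L, ha3F⟩ := Finset.mem_sdiff.mp ha3
  obtain ⟨ha4L, ha4F⟩ := Finset.mem_sdiff.mp ha4
  -- membership in G' for non-cycle edges
  have hG' : ∀ e ∈ G.edgeSet, e ≠ s(u, v) → e ≠ s(v, w) → e ≠ s(w, x) → e ≠ s(x, u) →
      e ∈ (G.deleteEdges {s(u, v), s(v, w), s(w, x), s(x, u)}).edgeSet := by
    intro e he n1 n2 n3 n4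
    rw [SimpleGraph.edgeSet_deleteEdges]
    exact ⟨he, by simp [n1, n2, n3, n4]⟩
  -- key: a cycle-edge color differs from any incident already-colored edge
  have key_uv : ∀ e' ∈ G.edgeSet, e' ≠ s(u, v) → e' ≠ s(v, w) → e' ≠ s(w, x) → e' ≠ s(x, u) →
      ∀ y, y ∈ e' → y ∈ (s(u, v) : Sym2 V) → a1 ≠ c e' := by
    intro e' he' n1 n2 n3 n4 y hy hy' heq
    apply ha1F
    refine Finset.mem_image.mpr ⟨e', ?_, heq.symm⟩
    rcases Sym2.mem_iff.mp hy' with rfl | rfl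
    · exact Finset.mem_union_left _ (Finset.mem_sdiff.mpr ⟨mem_inc _ _ he' hy, by simp [n1, n4]⟩)
    · exact Finset.mem_union_right _ (Finset.mem_sdiff.mpr ⟨mem_inc _ _ he' hy, by simp [n1, n2]⟩)
  have key_vw : ∀ e' ∈ G.edgeSet, e' ≠ s(u, v) → e' ≠ s(v, w) → e' ≠ s(w, x) → e' ≠ s(x, u) →
      ∀ y, y ∈ e' → y ∈ (s(v, w) : Sym2 V) → a2 ≠ c e' := by
    intro e' he' n1 n2 n3 n4 y hy hy' heq
    apply ha2F
    refine Finset.mem_image.mpr ⟨e', ?_, heq.symm⟩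
    rcases Sym2.mem_iff.mp hy' with rfl | rfl
    · exact Finset.mem_union_left _ (Finset.mem_sdiff.mpr ⟨mem_inc _ _ he' hy, by simp [n1, n2]⟩)
    · exact Finset.mem_union_right _ (Finset.mem_sdiff.mpr ⟨mem_inc _ _ he' hy, by simp [n2, n3]⟩)
  have key_wx : ∀ e' ∈ G.edgeSet, e' ≠ s(u, v) → e' ≠ s(v, w) → e' ≠ s(w, x) → e' ≠ s(x, u) →
      ∀ y, y ∈ e' → y ∈ (s(w, x) : Sym2 V) → a3 ≠ c e' := by
    intro e' he' n1 n2 n3 n4 y hy hy' heq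
    apply ha3F
    refine Finset.mem_image.mpr ⟨e', ?_, heq.symm⟩
    rcases Sym2.mem_iff.mp hy' with rfl | rfl
    · exact Finset.mem_union_left _ (Finset.mem_sdiff.mpr ⟨mem_inc _ _ he' hy, by simp [n2, n3]⟩)
    · exact Finset.mem_union_right _ (Finset.mem_sdiff.mpr ⟨mem_inc _ _ he' hy, by simp [n3, n4]⟩)
  have key_xu : ∀ e' ∈ G.edgeSet, e' ≠ s(u, v) → e' ≠ s(v, w) → e' ≠ s(w, x) → e' ≠ s(x, u) →
      ∀ y, y ∈ e' → y ∈ (s(x, u) : Sym2 V) → a4 ≠ c e' := by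
    intro e' he' n1 n2 n3 n4 y hy hy' heq
    apply ha4F
    refine Finset.mem_image.mpr ⟨e', ?_, heq.symm⟩
    rcases Sym2.mem_iff.mp hy' with rfl | rfl
    · exact Finset.mem_union_left _ (Finset.mem_sdiff.mpr ⟨mem_inc _ _ he' hy, by simp [n3, n4]⟩)
    · exact Finset.mem_union_right _ (Finset.mem_sdiff.mpr ⟨mem_inc _ _ he' hy, by simp [n1, n4]⟩)
  -- non-adjacency of opposite cycle edges
  have no13 : ∀ y : V, y ∈ (s(u, v) : Sym2 V) → y ∈ (s(w, x) : Sym2 V) → False := by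
    intro y h1 h2
    rcases Sym2.mem_iff.mp h1 with rfl | rfl <;> rcases Sym2.mem_iff.mp h2 with h | h
    · exact huw h
    · exact hxu' h.symm
    · exact hvw' h
    · exact hvx h
  have no24 : ∀ y : V, y ∈ (s(v, w) : Sym2 V) → y ∈ (s(x, u) : Sym2 V) → False := by
    intro y h1 h2
    rcases Sym2.mem_iff.mp h1 with rfl | rfl <;> rcases Sym2.mem_iff.mp h2 with h | h
    · exact hvx h
    · exact huv' h.symm
    · exact hwx' h
    · exact huw h.symm
  -- the extended coloring
  refine ⟨fun e => if e = s(u, v) then a1 else if e = s(v, w) then a2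
      else if e = s(w, x) then a3 else if e = s(x, u) then a4 else c e, ?_, ?_⟩
  · intro e he
    dsimp only
    split_ifs with p1 p2 p3 p4
    · rw [p1]; exact ha1L
    · rw [p2]; exact ha2L
    · rw [p3]; exact ha3L
    · rw [p4]; exact ha4L
    · exact hc1 e (hG' e he p1 p2 p3 p4)
  · intro e₁ he₁ e₂ he₂ hne hsh
    obtain ⟨y, hy1, hy2⟩ := hsh
    dsimp only
    by_cases p1 : e₁ = s(u, v)
    · subst p1
      rw [if_pos rfl]
      by_cases q1 : e₂ = s(u, v)
      · exact absurd q1.symm hne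
      rw [if_neg q1]
      by_cases q2 : e₂ = s(v, w)
      · subst q2; rw [if_pos rfl]; exact g12
      rw [if_neg q2]
      by_cases q3 : e₂ = s(w, x)
      · exact (no13 y hy1 (q3 ▸ hy2)).elim
      rw [if_neg q3]
      by_cases q4 : e₂ = s(x, u)
      · subst q4; rw [if_pos rfl]; exact g41.symm
      rw [if_neg q4]
      exact key_uv e₂ he₂ q1 q2 q3 q4 y hy2 hy1
    rw [if_neg p1]
    by_cases p2 : e₁ = s(v, w)
    · subst p2
      rw [if_pos rfl]
      by_cases q1 : e₂ = s(u, v)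
      · subst q1; rw [if_pos rfl]; exact g12.symm
      rw [if_neg q1]
      by_cases q2 : e₂ = s(v, w)
      · exact absurd q2.symm hne
      rw [if_neg q2]
      by_cases q3 : e₂ = s(w, x)
      · subst q3; rw [if_pos rfl]; exact g23
      rw [if_neg q3]
      by_cases q4 : e₂ = s(x, u)
      · exact (no24 y hy1 (q4 ▸ hy2)).elim
      rw [if_neg q4]
      exact key_vw e₂ he₂ q1 q2 q3 q4 y hy2 hy1
    rw [if_neg p2]
    by_cases p3 : e₁ = s(w, x)
    · subst p3
      rw [if_pos rfl]
      by_cases q1 : e₂ = s(u, v)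
      · exact (no13 y (q1 ▸ hy2) hy1).elim
      rw [if_neg q1]
      by_cases q2 : e₂ = s(v, w)
      · subst q2; rw [if_pos rfl]; exact g23.symm
      rw [if_neg q2]
      by_cases q3 : e₂ = s(w, x)
      · exact absurd q3.symm hne
      rw [if_neg q3]
      by_cases q4 : e₂ = s(x, u)
      · subst q4; rw [if_pos rfl]; exact g34
      rw [if_neg q4]
      exact key_wx e₂ he₂ q1 q2 q3 q4 y hy2 hy1
    rw [if_neg p3]
    by_cases p4 : e₁ = s(x, u)
    · subst p4
      rw [if_pos rfl]
      by_cases q1 : e₂ = s(u, v)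
      · subst q1; rw [if_pos rfl]; exact g41
      rw [if_neg q1]
      by_cases q2 : e₂ = s(v, w)
      · exact (no24 y (q2 ▸ hy2) hy1).elim
      rw [if_neg q2]
      by_cases q3 : e₂ = s(w, x)
      · subst q3; rw [if_pos rfl]; exact g34.symm
      rw [if_neg q3]
      by_cases q4 : e₂ = s(x, u)
      · exact absurd q4.symm hne
      rw [if_neg q4]
      exact key_xu e₂ he₂ q1 q2 q3 q4 y hy2 hy1
    rw [if_neg p4]
    by_cases q1 : e₂ = s(u, v)
    · subst q1; rw [if_pos rfl]
      exact (key_uv e₁ he₁ p1 p2 p3 p4 y hy1 hy2).symm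
    rw [if_neg q1]
    by_cases q2 : e₂ = s(v, w)
    · subst q2; rw [if_pos rfl]
      exact (key_vw e₁ he₁ p1 p2 p3 p4 y hy1 hy2).symm
    rw [if_neg q2]
    by_cases q3 : e₂ = s(w, x)
    · subst q3; rw [if_pos rfl]
      exact (key_wx e₁ he₁ p1 p2 p3 p4 y hy1 hy2).symm
    rw [if_neg q3]
    by_cases q4 : e₂ = s(x, u)
    · subst q4; rw [if_pos rfl]
      exact (key_xu e₁ he₁ p1 p2 p3 p4 y hy1 hy2).symm
    rw [if_neg q4]
    exact hc2 e₁ (hG' e₁ he₁ p1 p2 p3 p4) e₂ (hG' e₂ he₂ q1 q2 q3 q4) hne ⟨y, hy1, hy2⟩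
end

section
/- Let G be a simple graph with maximum degree Δ ≤ 8 containing the configuration C11: a vertex u of degree 5 with three neighbors v, w, x where w is adjacent to both v and x, and deg(v) = deg(w) = deg(x) = 6. If G minus the five edges {uv, vw, uw, ux, wx} admits a proper edge coloring from 9-lists, then the coloring extends to all of G. -/
private lemma pick_avoid (S T : Finset ℕ) (h : T.card < S.card) : ∃ a ∈ S, a ∉ T := by
  by_contra h'
  push_neg at h'
  exact absurd (Finset.card_le_card h') (not_le.2 h)

private lemma card_pair_le (a b : ℕ) : ({a, b} : Finset ℕ).card ≤ 2 :=
  (Finset.card_insert_le _ _).trans (by simp)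

private lemma card_triple_le (a b c : ℕ) : ({a, b, c} : Finset ℕ).card ≤ 3 :=
  (Finset.card_insert_le _ _).trans (by have := card_pair_le b c; omega)

/-- A triangle with lists of size ≥ 2 is colorable unless all lists are equal of size 2. -/
private lemma tri (A B C : Finset ℕ) (hA : 2 ≤ A.card) (hB : 2 ≤ B.card)
    (hC : 2 ≤ C.card) (h : ¬(A = B ∧ A = C ∧ A.card = 2)) :
    ∃ α ∈ A, ∃ β ∈ B, ∃ γ ∈ C, α ≠ β ∧ α ≠ γ ∧ β ≠ γ := by
  by_cases hAB : A = B
  · by_cases hAC : A = C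
    · have h3 : 3 ≤ A.card := by
        rcases Nat.lt_or_ge A.card 3 with h' | h'
        · exact absurd ⟨hAB, hAC, by omega⟩ h
        · exact h'
      obtain ⟨α, hα⟩ := Finset.card_pos.1 (by omega : 0 < A.card)
      obtain ⟨β, hβ, hβn⟩ := pick_avoid A {α} (by simp; omega)
      obtain ⟨γ, hγ, hγn⟩ := pick_avoid A {α, β} (lt_of_le_of_lt (card_pair_le α β) (by omega))
      simp only [Finset.mem_insert, Finset.mem_singleton, not_or] at hβn hγn
      refine ⟨α, hα, β, hAB ▸ hβ, γ, hAC ▸ hγ, ?_, ?_, ?_⟩ <;> omega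
    · by_cases hsub : A ⊆ C
      · have hns : ¬ C ⊆ A := fun h' => hAC (Finset.Subset.antisymm hsub h')
        obtain ⟨t, htC, htA⟩ := Finset.not_subset.1 hns
        obtain ⟨α, hα⟩ := Finset.card_pos.1 (by omega : 0 < A.card)
        obtain ⟨β, hβ, hβn⟩ := pick_avoid B {α} (by simp; omega)
        simp only [Finset.mem_singleton] at hβn
        have e1 : α ≠ t := fun e => htA (e ▸ hα)
        have e2 : β ≠ t := fun e => htA (e ▸ (hAB ▸ hβ : β ∈ A))
        refine ⟨α, hα, β, hβ, t, htC, ?_, ?_, ?_⟩ <;> omega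
      · obtain ⟨t, htA, htC⟩ := Finset.not_subset.1 hsub
        obtain ⟨α, hα, hαn⟩ := pick_avoid A {t} (by simp; omega)
        obtain ⟨γ, hγ, hγn⟩ := pick_avoid C {α} (by simp; omega)
        simp only [Finset.mem_singleton] at hαn hγn
        have e1 : t ≠ γ := fun e => htC (e ▸ hγ)
        refine ⟨α, hα, t, hAB ▸ htA, γ, hγ, ?_, ?_, ?_⟩ <;> omega
  · by_cases hsub : A ⊆ B
    · have hns : ¬ B ⊆ A := fun h' => hAB (Finset.Subset.antisymm hsub h')
      obtain ⟨t, htB, htA⟩ := Finset.not_subset.1 hns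
      obtain ⟨γ, hγ, hγn⟩ := pick_avoid C {t} (by simp; omega)
      obtain ⟨α, hα, hαn⟩ := pick_avoid A {γ} (by simp; omega)
      simp only [Finset.mem_singleton] at hγn hαn
      have e1 : α ≠ t := fun e => htA (e ▸ hα)
      refine ⟨α, hα, t, htB, γ, hγ, ?_, ?_, ?_⟩ <;> omega
    · obtain ⟨t, htA, htB⟩ := Finset.not_subset.1 hsub
      obtain ⟨γ, hγ, hγn⟩ := pick_avoid C {t} (by simp; omega)
      obtain ⟨β, hβ, hβn⟩ := pick_avoid B {γ} (by simp; omega)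
      simp only [Finset.mem_singleton] at hγn hβn
      have e1 : t ≠ β := fun e => htB (e ▸ hβ)
      refine ⟨t, htA, β, hβ, γ, hγ, ?_, ?_, ?_⟩ <;> omega

/-- The key list-coloring lemma for configuration C11's five edges
    a, b, c, d, e with lists A, B, C, D, E; non-adjacent pairs: (a,e) and (c,d). -/
private lemma key (A B C D E : Finset ℕ) (hA : 3 ≤ A.card) (hB : 4 ≤ B.card)
    (hC : 3 ≤ C.card) (hD : 2 ≤ D.card) (hE : 2 ≤ E.card) :
    ∃ α ∈ A, ∃ β ∈ B, ∃ γ ∈ C, ∃ δ ∈ D, ∃ ε ∈ E,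
      α ≠ β ∧ α ≠ γ ∧ α ≠ δ ∧ β ≠ γ ∧ β ≠ δ ∧ β ≠ ε ∧ γ ≠ ε ∧ δ ≠ ε := by
  by_cases h1 : (C ∩ D).Nonempty
  · obtain ⟨t, ht⟩ := h1
    obtain ⟨htC, htD⟩ := Finset.mem_inter.1 ht
    obtain ⟨ε, hε, hεn⟩ := pick_avoid E {t} (by simp; omega)
    obtain ⟨β, hβ, hβn⟩ := pick_avoid B {t, ε} (lt_of_le_of_lt (card_pair_le t ε) (by omega))
    obtain ⟨α, hα, hαn⟩ := pick_avoid A {t, β} (lt_of_le_of_lt (card_pair_le t β) (by omega))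
    simp only [Finset.mem_insert, Finset.mem_singleton, not_or] at hεn hβn hαn
    refine ⟨α, hα, β, hβ, t, htC, t, htD, ε, hε, ?_, ?_, ?_, ?_, ?_, ?_, ?_, ?_⟩ <;> omega
  · by_cases h2 : (A ∩ E).Nonempty
    · obtain ⟨t, ht⟩ := h2
      obtain ⟨htA, htE⟩ := Finset.mem_inter.1 ht
      obtain ⟨δ, hδ, hδn⟩ := pick_avoid D {t} (by simp; omega)
      obtain ⟨β, hβ, hβn⟩ := pick_avoid B {t, δ} (lt_of_le_of_lt (card_pair_le t δ) (by omega))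
      obtain ⟨γ, hγ, hγn⟩ := pick_avoid C {t, β} (lt_of_le_of_lt (card_pair_le t β) (by omega))
      simp only [Finset.mem_insert, Finset.mem_singleton, not_or] at hδn hβn hγn
      refine ⟨t, htA, β, hβ, γ, hγ, δ, hδ, t, htE, ?_, ?_, ?_, ?_, ?_, ?_, ?_, ?_⟩ <;> omega
    · have hCD : ∀ t ∈ D, t ∉ C := fun t ht htC => h1 ⟨t, Finset.mem_inter.2 ⟨htC, ht⟩⟩
      by_cases h3 : ∃ t ∈ D, t ∉ B
      · obtain ⟨δ, hδ, hδB⟩ := h3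
        obtain ⟨ε, hε, hεn⟩ := pick_avoid E {δ} (by simp; omega)
        obtain ⟨α, hα, hαn⟩ := pick_avoid A {δ} (by simp; omega)
        obtain ⟨γ, hγ, hγn⟩ := pick_avoid C {α, ε} (lt_of_le_of_lt (card_pair_le α ε) (by omega))
        obtain ⟨β, hβ, hβn⟩ := pick_avoid B {α, γ, ε}
          (lt_of_le_of_lt (card_triple_le α γ ε) (by omega))
        simp only [Finset.mem_insert, Finset.mem_singleton, not_or] at hεn hαn hγn hβn
        have e1 : β ≠ δ := fun e => hδB (e ▸ hβ)
        refine ⟨α, hα, β, hβ, γ, hγ, δ, hδ, ε, hε, ?_, ?_, ?_, ?_, ?_, ?_, ?_, ?_⟩ <;> omega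
      · by_cases h4 : ∃ t ∈ E, t ∉ B
        · obtain ⟨ε, hε, hεB⟩ := h4
          obtain ⟨δ, hδ, hδn⟩ := pick_avoid D {ε} (by simp; omega)
          obtain ⟨γ, hγ, hγn⟩ := pick_avoid C {ε} (by simp; omega)
          obtain ⟨α, hα, hαn⟩ := pick_avoid A {γ, δ} (lt_of_le_of_lt (card_pair_le γ δ) (by omega))
          obtain ⟨β, hβ, hβn⟩ := pick_avoid B {α, γ, δ}
            (lt_of_le_of_lt (card_triple_le α γ δ) (by omega))
          simp only [Finset.mem_insert, Finset.mem_singleton, not_or] at hδn hγn hαn hβn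
          have e1 : β ≠ ε := fun e => hεB (e ▸ hβ)
          refine ⟨α, hα, β, hβ, γ, hγ, δ, hδ, ε, hε, ?_, ?_, ?_, ?_, ?_, ?_, ?_, ?_⟩ <;> omega
        · push_neg at h3 h4
          obtain ⟨ε, hε⟩ := Finset.card_pos.1 (by omega : 0 < E.card)
          obtain ⟨δ, hδ, hδε⟩ := pick_avoid D {ε} (by simp; omega)
          simp only [Finset.mem_singleton] at hδε
          have hδB := h3 δ hδ
          have hεB := h4 ε hε
          have hBcard : 2 ≤ (B \ {δ, ε}).card := by
            have hsub : ({δ, ε} : Finset ℕ) ⊆ B := by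
              intro z hz; simp only [Finset.mem_insert, Finset.mem_singleton] at hz
              rcases hz with rfl | rfl; exacts [hδB, hεB]
            have h1' := Finset.card_sdiff_of_subset hsub
            have h2' : ({δ, ε} : Finset ℕ).card = 2 := by
              rw [Finset.card_insert_of_notMem (by simp [hδε]), Finset.card_singleton]
            omega
          have hAcard : ∀ z : ℕ, 2 ≤ (A \ {z}).card := fun z => by
            have := Finset.le_card_sdiff ({z} : Finset ℕ) A; simp at this; omega
          have hCcard : 2 ≤ (C \ {ε}).card := by
            have := Finset.le_card_sdiff ({ε} : Finset ℕ) C; simp at this; omega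
          have finish : ∀ δ' ∈ D, δ' ≠ ε →
              (∃ α ∈ A \ {δ'}, ∃ β ∈ B \ {δ', ε}, ∃ γ ∈ C \ {ε}, α ≠ β ∧ α ≠ γ ∧ β ≠ γ) →
              (∃ α ∈ A, ∃ β ∈ B, ∃ γ ∈ C, ∃ δ ∈ D, ∃ ε' ∈ E,
                α ≠ β ∧ α ≠ γ ∧ α ≠ δ ∧ β ≠ γ ∧ β ≠ δ ∧ β ≠ ε' ∧ γ ≠ ε' ∧ δ ≠ ε') := by
            rintro δ' hδ' hδ'ε ⟨α, hα, β, hβ, γ, hγ, hαβ, hαγ, hβγ⟩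
            simp only [Finset.mem_sdiff, Finset.mem_insert, Finset.mem_singleton,
              not_or] at hα hβ hγ
            obtain ⟨hα1, hα2⟩ := hα
            obtain ⟨hβ1, hβ2, hβ3⟩ := hβ
            obtain ⟨hγ1, hγ2⟩ := hγ
            refine ⟨α, hα1, β, hβ1, γ, hγ1, δ', hδ', ε, hε,
              ?_, ?_, ?_, ?_, ?_, ?_, ?_, ?_⟩ <;> omega
          by_cases hfail : A \ {δ} = B \ {δ, ε} ∧ A \ {δ} = C \ {ε} ∧ (A \ {δ}).card = 2
          · have hεC : ε ∈ C := by
              by_contra hεC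
              have heq : C \ {ε} = C := by
                apply Finset.sdiff_eq_self_of_disjoint
                simp [Finset.disjoint_singleton_right, hεC]
              have h1' := hfail.2.2
              have h2' := hfail.2.1
              rw [heq] at h2'
              rw [h2'] at h1'
              omega
            have hεD : ε ∉ D := fun hh => hCD ε hh hεC
            obtain ⟨δ', hδ', hδ'δ⟩ := pick_avoid D {δ} (by simp; omega)
            simp only [Finset.mem_singleton] at hδ'δ
            have hδ'ε : δ' ≠ ε := fun e => hεD (e ▸ hδ')
            refine finish δ' hδ' hδ'ε (tri _ _ _ (hAcard δ') ?_ hCcard ?_)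
            · have hδ'B := h3 δ' hδ'
              have hsub : ({δ', ε} : Finset ℕ) ⊆ B := by
                intro z hz; simp only [Finset.mem_insert, Finset.mem_singleton] at hz
                rcases hz with rfl | rfl; exacts [hδ'B, hεB]
              have h1' := Finset.card_sdiff_of_subset hsub
              have h2' : ({δ', ε} : Finset ℕ).card = 2 := by
                rw [Finset.card_insert_of_notMem (by simp [hδ'ε]), Finset.card_singleton]
              omega
            · rintro ⟨e1, e2, _⟩
              have hB2 : B \ {δ', ε} = B \ {δ, ε} := by
                rw [← e1, e2, ← hfail.2.1, hfail.1]
              have hmem : δ' ∈ B \ {δ, ε} := by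
                simp [Finset.mem_sdiff, h3 δ' hδ', hδ'δ, hδ'ε]
              rw [← hB2] at hmem
              simp [Finset.mem_sdiff] at hmem
          · exact finish δ hδ hδε (tri _ _ _ (hAcard δ) hBcard hCcard hfail)

section AdjDel

variable {V : Type*} {G : SimpleGraph V} {u v w x : V}

private lemma adj_del_u (nuv : u ≠ v) (nuw : u ≠ w) (nux : u ≠ x)
    (nwv : w ≠ v) (nwx : w ≠ x) (nvx : v ≠ x) (y : V) :
    (G.deleteEdges {s(u,v), s(v,w), s(u,w), s(u,x), s(w,x)}).Adj u y ↔
      (G.Adj u y ∧ ¬(y = v ∨ y = w ∨ y = x)) := by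
  have nvu := nuv.symm; have nwu := nuw.symm; have nxu := nux.symm
  have nvw := nwv.symm; have nxw := nwx.symm; have nxv := nvx.symm
  rw [SimpleGraph.deleteEdges_adj]
  simp [Set.mem_insert_iff, Sym2.eq_iff, nuv, nuw, nux, nwv, nwx, nvx, nvu, nwu, nxu,
    nvw, nxw, nxv] <;> tauto

private lemma adj_del_v (nuv : u ≠ v) (nuw : u ≠ w) (nux : u ≠ x)
    (nwv : w ≠ v) (nwx : w ≠ x) (nvx : v ≠ x) (y : V) :
    (G.deleteEdges {s(u,v), s(v,w), s(u,w), s(u,x), s(w,x)}).Adj v y ↔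
      (G.Adj v y ∧ ¬(y = u ∨ y = w)) := by
  have nvu := nuv.symm; have nwu := nuw.symm; have nxu := nux.symm
  have nvw := nwv.symm; have nxw := nwx.symm; have nxv := nvx.symm
  rw [SimpleGraph.deleteEdges_adj]
  simp [Set.mem_insert_iff, Sym2.eq_iff, nuv, nuw, nux, nwv, nwx, nvx, nvu, nwu, nxu,
    nvw, nxw, nxv] <;> tauto

private lemma adj_del_w (nuv : u ≠ v) (nuw : u ≠ w) (nux : u ≠ x)
    (nwv : w ≠ v) (nwx : w ≠ x) (nvx : v ≠ x) (y : V) :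
    (G.deleteEdges {s(u,v), s(v,w), s(u,w), s(u,x), s(w,x)}).Adj w y ↔
      (G.Adj w y ∧ ¬(y = u ∨ y = v ∨ y = x)) := by
  have nvu := nuv.symm; have nwu := nuw.symm; have nxu := nux.symm
  have nvw := nwv.symm; have nxw := nwx.symm; have nxv := nvx.symm
  rw [SimpleGraph.deleteEdges_adj]
  simp [Set.mem_insert_iff, Sym2.eq_iff, nuv, nuw, nux, nwv, nwx, nvx, nvu, nwu, nxu,
    nvw, nxw, nxv] <;> tauto

private lemma adj_del_x (nuv : u ≠ v) (nuw : u ≠ w) (nux : u ≠ x)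
    (nwv : w ≠ v) (nwx : w ≠ x) (nvx : v ≠ x) (y : V) :
    (G.deleteEdges {s(u,v), s(v,w), s(u,w), s(u,x), s(w,x)}).Adj x y ↔
      (G.Adj x y ∧ ¬(y = u ∨ y = w)) := by
  have nvu := nuv.symm; have nwu := nuw.symm; have nxu := nux.symm
  have nvw := nwv.symm; have nxw := nwx.symm; have nxv := nvx.symm
  rw [SimpleGraph.deleteEdges_adj]
  simp [Set.mem_insert_iff, Sym2.eq_iff, nuv, nuw, nux, nwv, nwx, nvx, nvu, nwu, nxu,
    nvw, nxw, nxv] <;> tauto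

end AdjDel

set_option maxHeartbeats 1600000 in
/-- Configuration (C₁₁): `G` is a simple graph of maximum degree at most 8 containing a
vertex `u` of degree 5 with three neighbors `v, w, x` where `w` is adjacent to both `v`
and `x`, and `deg v = deg w = deg x = 6`.  For any assignment of lists of at least 9
colors to the edges, any proper coloring from the lists of `G` minus the five edges
`uv, vw, uw, ux, wx` extends to a proper coloring from the lists of all of `G`. -/
theorem extend_coloring_config_C11 {V : Type*} [Fintype V] (G : SimpleGraph V)
    [DecidableRel G.Adj] (hΔ : ∀ y, G.degree y ≤ 8)
    (u v w x : V) (huv : G.Adj u v) (huw : G.Adj u w) (hux : G.Adj u x)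
    (hwv : G.Adj w v) (hwx : G.Adj w x) (hvx : v ≠ x)
    (hdu : G.degree u = 5) (hdv : G.degree v = 6) (hdw : G.degree w = 6)
    (hdx : G.degree x = 6)
    (L : Sym2 V → Finset ℕ) (hL : ∀ e ∈ G.edgeSet, 9 ≤ (L e).card)
    (c₀ : Sym2 V → ℕ)
    (hc₀mem : ∀ e ∈ (G.deleteEdges {s(u,v), s(v,w), s(u,w), s(u,x), s(w,x)}).edgeSet,
      c₀ e ∈ L e)
    (hc₀prop : ∀ e₁ ∈ (G.deleteEdges {s(u,v), s(v,w), s(u,w), s(u,x), s(w,x)}).edgeSet,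
      ∀ e₂ ∈ (G.deleteEdges {s(u,v), s(v,w), s(u,w), s(u,x), s(w,x)}).edgeSet,
        e₁ ≠ e₂ → (∃ y, y ∈ e₁ ∧ y ∈ e₂) → c₀ e₁ ≠ c₀ e₂) :
    ∃ c : Sym2 V → ℕ,
      (∀ e ∈ (G.deleteEdges {s(u,v), s(v,w), s(u,w), s(u,x), s(w,x)}).edgeSet, c e = c₀ e) ∧
      (∀ e ∈ G.edgeSet, c e ∈ L e) ∧
      ∀ e₁ ∈ G.edgeSet, ∀ e₂ ∈ G.edgeSet, e₁ ≠ e₂ → (∃ y, y ∈ e₁ ∧ y ∈ e₂) →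
        c e₁ ≠ c e₂ := by
  classical
  set Sfive : Set (Sym2 V) := {s(u,v), s(v,w), s(u,w), s(u,x), s(w,x)} with hSfive
  set G' := G.deleteEdges Sfive with hG'
  -- distinctness of vertices
  have nuv : u ≠ v := huv.ne
  have nuw : u ≠ w := huw.ne
  have nux : u ≠ x := hux.ne
  have nwv : w ≠ v := hwv.ne
  have nwx : w ≠ x := hwx.ne
  have nvx : v ≠ x := hvx
  have nvu := nuv.symm; have nwu := nuw.symm; have nxu := nux.symm
  have nvw := nwv.symm; have nxw := nwx.symm; have nxv := nvx.symm
  -- membership in Sfive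
  have hmemS : ∀ f : Sym2 V, f ∈ Sfive ↔
      (f = s(u,v) ∨ f = s(v,w) ∨ f = s(u,w) ∨ f = s(u,x) ∨ f = s(w,x)) := by
    intro f
    rw [hSfive]
    simp [Set.mem_insert_iff, Set.mem_singleton_iff]
  have hG'edge : ∀ f, f ∈ G'.edgeSet ↔ f ∈ G.edgeSet ∧ f ∉ Sfive := by
    intro f
    rw [hG', SimpleGraph.edgeSet_deleteEdges, Set.mem_diff]
  -- neighbor finsets in G'
  have hNu : G'.neighborFinset u = G.neighborFinset u \ {v, w, x} := by
    ext y
    rw [SimpleGraph.mem_neighborFinset, hG', hSfive,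
      adj_del_u nuv nuw nux nwv nwx nvx y]
    simp only [Finset.mem_sdiff, SimpleGraph.mem_neighborFinset, Finset.mem_insert,
      Finset.mem_singleton]
  have hNv : G'.neighborFinset v = G.neighborFinset v \ {u, w} := by
    ext y
    rw [SimpleGraph.mem_neighborFinset, hG', hSfive,
      adj_del_v nuv nuw nux nwv nwx nvx y]
    simp only [Finset.mem_sdiff, SimpleGraph.mem_neighborFinset, Finset.mem_insert,
      Finset.mem_singleton]
  have hNw : G'.neighborFinset w = G.neighborFinset w \ {u, v, x} := by
    ext y
    rw [SimpleGraph.mem_neighborFinset, hG', hSfive,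
      adj_del_w nuv nuw nux nwv nwx nvx y]
    simp only [Finset.mem_sdiff, SimpleGraph.mem_neighborFinset, Finset.mem_insert,
      Finset.mem_singleton]
  have hNx : G'.neighborFinset x = G.neighborFinset x \ {u, w} := by
    ext y
    rw [SimpleGraph.mem_neighborFinset, hG', hSfive,
      adj_del_x nuv nuw nux nwv nwx nvx y]
    simp only [Finset.mem_sdiff, SimpleGraph.mem_neighborFinset, Finset.mem_insert,
      Finset.mem_singleton]
  -- degrees in G'
  have hdu' : G'.degree u = 2 := by
    rw [← SimpleGraph.card_neighborFinset_eq_degree, hNu,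
      Finset.card_sdiff_of_subset (by
        intro z hz
        simp only [Finset.mem_insert, Finset.mem_singleton] at hz
        rcases hz with rfl | rfl | rfl <;>
          simp [SimpleGraph.mem_neighborFinset, huv, huw, hux])]
    have h1 : ({v, w, x} : Finset V).card = 3 := by
      rw [Finset.card_insert_of_notMem (by simp [nvw, nvx]),
        Finset.card_insert_of_notMem (by simp [nwx]), Finset.card_singleton]
    rw [h1, SimpleGraph.card_neighborFinset_eq_degree, hdu]
  have hdv' : G'.degree v = 4 := by
    rw [← SimpleGraph.card_neighborFinset_eq_degree, hNv,
      Finset.card_sdiff_of_subset (by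
        intro z hz
        simp only [Finset.mem_insert, Finset.mem_singleton] at hz
        rcases hz with rfl | rfl <;>
          simp [SimpleGraph.mem_neighborFinset, huv.symm, hwv.symm])]
    have h1 : ({u, w} : Finset V).card = 2 := by
      rw [Finset.card_insert_of_notMem (by simp [nuw]), Finset.card_singleton]
    rw [h1, SimpleGraph.card_neighborFinset_eq_degree, hdv]
  have hdw' : G'.degree w = 3 := by
    rw [← SimpleGraph.card_neighborFinset_eq_degree, hNw,
      Finset.card_sdiff_of_subset (by
        intro z hz
        simp only [Finset.mem_insert, Finset.mem_singleton] at hz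
        rcases hz with rfl | rfl | rfl <;>
          simp [SimpleGraph.mem_neighborFinset, huw.symm, hwv, hwx])]
    have h1 : ({u, v, x} : Finset V).card = 3 := by
      rw [Finset.card_insert_of_notMem (by simp [nuv, nux]),
        Finset.card_insert_of_notMem (by simp [nvx]), Finset.card_singleton]
    rw [h1, SimpleGraph.card_neighborFinset_eq_degree, hdw]
  have hdx' : G'.degree x = 4 := by
    rw [← SimpleGraph.card_neighborFinset_eq_degree, hNx,
      Finset.card_sdiff_of_subset (by
        intro z hz
        simp only [Finset.mem_insert, Finset.mem_singleton] at hz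
        rcases hz with rfl | rfl <;>
          simp [SimpleGraph.mem_neighborFinset, hux.symm, hwx.symm])]
    have h1 : ({u, w} : Finset V).card = 2 := by
      rw [Finset.card_insert_of_notMem (by simp [nuw]), Finset.card_singleton]
    rw [h1, SimpleGraph.card_neighborFinset_eq_degree, hdx]
  -- forbidden color sets
  set F : V → V → Finset ℕ :=
    fun p q => ((G'.incidenceFinset p ∪ G'.incidenceFinset q).image c₀) with hF
  have hFcard : ∀ p q : V, (F p q).card ≤ G'.degree p + G'.degree q := by
    intro p q
    calc (F p q).card ≤ (G'.incidenceFinset p ∪ G'.incidenceFinset q).card :=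
          Finset.card_image_le
      _ ≤ (G'.incidenceFinset p).card + (G'.incidenceFinset q).card :=
          Finset.card_union_le _ _
      _ = _ := by
          rw [SimpleGraph.card_incidenceFinset_eq_degree,
            SimpleGraph.card_incidenceFinset_eq_degree]
  -- the five edges are in G
  have hea : s(u,v) ∈ G.edgeSet := G.mem_edgeSet.2 huv
  have heb : s(u,w) ∈ G.edgeSet := G.mem_edgeSet.2 huw
  have hec : s(u,x) ∈ G.edgeSet := G.mem_edgeSet.2 hux
  have hed : s(v,w) ∈ G.edgeSet := G.mem_edgeSet.2 hwv.symm
  have hee : s(w,x) ∈ G.edgeSet := G.mem_edgeSet.2 hwx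
  -- list size bounds
  have hLa : 3 ≤ ((L s(u,v)) \ F u v).card := by
    have h9 := hL s(u,v) hea
    have hle := Finset.le_card_sdiff (F u v) (L s(u,v))
    have hb := hFcard u v
    rw [hdu', hdv'] at hb
    omega
  have hLb : 4 ≤ ((L s(u,w)) \ F u w).card := by
    have h9 := hL s(u,w) heb
    have hle := Finset.le_card_sdiff (F u w) (L s(u,w))
    have hb := hFcard u w
    rw [hdu', hdw'] at hb
    omega
  have hLc : 3 ≤ ((L s(u,x)) \ F u x).card := by
    have h9 := hL s(u,x) hec
    have hle := Finset.le_card_sdiff (F u x) (L s(u,x))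
    have hb := hFcard u x
    rw [hdu', hdx'] at hb
    omega
  have hLd : 2 ≤ ((L s(v,w)) \ F v w).card := by
    have h9 := hL s(v,w) hed
    have hle := Finset.le_card_sdiff (F v w) (L s(v,w))
    have hb := hFcard v w
    rw [hdv', hdw'] at hb
    omega
  have hLe : 2 ≤ ((L s(w,x)) \ F w x).card := by
    have h9 := hL s(w,x) hee
    have hle := Finset.le_card_sdiff (F w x) (L s(w,x))
    have hb := hFcard w x
    rw [hdw', hdx'] at hb
    omega
  obtain ⟨α, hα, β, hβ, γ, hγ, δ, hδ, ε, hε, hc1, hc2, hc3, hc4, hc5, hc6, hc7, hc8⟩ :=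
    key _ _ _ _ _ hLa hLb hLc hLd hLe
  obtain ⟨hαL, hαF⟩ := Finset.mem_sdiff.1 hα
  obtain ⟨hβL, hβF⟩ := Finset.mem_sdiff.1 hβ
  obtain ⟨hγL, hγF⟩ := Finset.mem_sdiff.1 hγ
  obtain ⟨hδL, hδF⟩ := Finset.mem_sdiff.1 hδ
  obtain ⟨hεL, hεF⟩ := Finset.mem_sdiff.1 hε
  -- distinctness of the five edges
  have d_ba : s(u,w) ≠ s(u,v) := by simp [Sym2.eq_iff, nwv, nuv]
  have d_ca : s(u,x) ≠ s(u,v) := by simp [Sym2.eq_iff, nxv, nuv]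
  have d_cb : s(u,x) ≠ s(u,w) := by simp [Sym2.eq_iff, nxw, nuw]
  have d_da : s(v,w) ≠ s(u,v) := by simp [Sym2.eq_iff, nvu, nwv.symm, nwu]
  have d_db : s(v,w) ≠ s(u,w) := by simp [Sym2.eq_iff, nvu, nvw, nwu]
  have d_dc : s(v,w) ≠ s(u,x) := by simp [Sym2.eq_iff, nvu, nvx, nwu, nwx]
  have d_ea : s(w,x) ≠ s(u,v) := by simp [Sym2.eq_iff, nwu, nwv, nxu, nxv]
  have d_eb : s(w,x) ≠ s(u,w) := by simp [Sym2.eq_iff, nwu, nxu, nxw]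
  have d_ec : s(w,x) ≠ s(u,x) := by simp [Sym2.eq_iff, nwu, nwx, nxu]
  have d_ed : s(w,x) ≠ s(v,w) := by simp [Sym2.eq_iff, nwv, nxv, nxw]
  -- the extended coloring
  obtain ⟨cc, hca, hcb, hcc2, hcd, hce, hcother⟩ :
      ∃ cc : Sym2 V → ℕ, cc s(u,v) = α ∧ cc s(u,w) = β ∧ cc s(u,x) = γ ∧ cc s(v,w) = δ ∧
        cc s(w,x) = ε ∧ ∀ f, f ≠ s(u,v) → f ≠ s(u,w) → f ≠ s(u,x) → f ≠ s(v,w) →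
          f ≠ s(w,x) → cc f = c₀ f := by
    refine ⟨fun f => if f = s(u,v) then α else if f = s(u,w) then β else if f = s(u,x) then γ
      else if f = s(v,w) then δ else if f = s(w,x) then ε else c₀ f, ?_, ?_, ?_, ?_, ?_, ?_⟩
    · simp
    · beta_reduce; rw [if_neg d_ba, if_pos rfl]
    · beta_reduce; rw [if_neg d_ca, if_neg d_cb, if_pos rfl]
    · beta_reduce; rw [if_neg d_da, if_neg d_db, if_neg d_dc, if_pos rfl]
    · beta_reduce; rw [if_neg d_ea, if_neg d_eb, if_neg d_ec, if_neg d_ed, if_pos rfl]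
    · intro f h1 h2 h3 h4 h5
      beta_reduce
      rw [if_neg h1, if_neg h2, if_neg h3, if_neg h4, if_neg h5]
  have hnotS : ∀ f, f ∉ Sfive → cc f = c₀ f := by
    intro f hf
    rw [hmemS] at hf
    push_neg at hf
    exact hcother f hf.1 hf.2.2.1 hf.2.2.2.1 hf.2.1 hf.2.2.2.2
  -- key mixed-incidence lemma
  have mixed : ∀ (p q : V) (χ : ℕ), χ ∉ F p q → ∀ e₂ ∈ G'.edgeSet,
      (∃ y, y ∈ s(p,q) ∧ y ∈ e₂) → χ ≠ c₀ e₂ := by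
    rintro p q χ hχ e₂ he₂ ⟨y, hy1, hy2⟩ heq
    apply hχ
    rw [heq, hF]
    apply Finset.mem_image_of_mem
    rcases Sym2.mem_iff.1 hy1 with rfl | rfl
    · exact Finset.mem_union_left _ ((G'.mem_incidenceFinset _ _).2 ⟨he₂, hy2⟩)
    · exact Finset.mem_union_right _ ((G'.mem_incidenceFinset _ _).2 ⟨he₂, hy2⟩)
  refine ⟨cc, ?_, ?_, ?_⟩
  · intro e he
    exact hnotS e ((hG'edge e).1 he).2
  · intro e he
    by_cases h : e ∈ Sfive
    · rcases (hmemS e).1 h with rfl | rfl | rfl | rfl | rfl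
      · rw [hca]; exact hαL
      · rw [hcd]; exact hδL
      · rw [hcb]; exact hβL
      · rw [hcc2]; exact hγL
      · rw [hce]; exact hεL
    · rw [hnotS e h]
      exact hc₀mem e ((hG'edge e).2 ⟨he, h⟩)
  · intro e₁ he₁ e₂ he₂ hne hshare
    by_cases h1 : e₁ ∈ Sfive <;> by_cases h2 : e₂ ∈ Sfive
    · rcases (hmemS e₁).1 h1 with rfl | rfl | rfl | rfl | rfl <;>
        rcases (hmemS e₂).1 h2 with rfl | rfl | rfl | rfl | rfl <;>
        simp only [hca, hcb, hcc2, hcd, hce] <;>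
        first
          | exact absurd rfl hne
          | exact hc1 | exact hc1.symm | exact hc2 | exact hc2.symm
          | exact hc3 | exact hc3.symm | exact hc4 | exact hc4.symm
          | exact hc5 | exact hc5.symm | exact hc6 | exact hc6.symm
          | exact hc7 | exact hc7.symm | exact hc8 | exact hc8.symm
          | (obtain ⟨y, hy1, hy2⟩ := hshare;
             rw [Sym2.mem_iff] at hy1 hy2;
             rcases hy1 with rfl | rfl <;> rcases hy2 with h' | h' <;>
               first
                 | exact absurd h' nuv | exact absurd h' nuw | exact absurd h' nux
                 | exact absurd h' nwv | exact absurd h' nwx | exact absurd h' nvx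
                 | exact absurd h' nvu | exact absurd h' nwu | exact absurd h' nxu
                 | exact absurd h' nvw | exact absurd h' nxw | exact absurd h' nxv)
    · have he₂' : e₂ ∈ G'.edgeSet := (hG'edge e₂).2 ⟨he₂, h2⟩
      rw [hnotS e₂ h2]
      rcases (hmemS e₁).1 h1 with rfl | rfl | rfl | rfl | rfl
      · rw [hca]; exact mixed u v α hαF e₂ he₂' hshare
      · rw [hcd]; exact mixed v w δ hδF e₂ he₂' hshare
      · rw [hcb]; exact mixed u w β hβF e₂ he₂' hshare
      · rw [hcc2]; exact mixed u x γ hγF e₂ he₂' hshare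
      · rw [hce]; exact mixed w x ε hεF e₂ he₂' hshare
    · have he₁' : e₁ ∈ G'.edgeSet := (hG'edge e₁).2 ⟨he₁, h1⟩
      rw [hnotS e₁ h1]
      obtain ⟨y, hy1, hy2⟩ := hshare
      rcases (hmemS e₂).1 h2 with rfl | rfl | rfl | rfl | rfl
      · rw [hca]; exact (mixed u v α hαF e₁ he₁' ⟨y, hy2, hy1⟩).symm
      · rw [hcd]; exact (mixed v w δ hδF e₁ he₁' ⟨y, hy2, hy1⟩).symm
      · rw [hcb]; exact (mixed u w β hβF e₁ he₁' ⟨y, hy2, hy1⟩).symm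
      · rw [hcc2]; exact (mixed u x γ hγF e₁ he₁' ⟨y, hy2, hy1⟩).symm
      · rw [hce]; exact (mixed w x ε hεF e₁ he₁' ⟨y, hy2, hy1⟩).symm
    · have he₁' : e₁ ∈ G'.edgeSet := (hG'edge e₁).2 ⟨he₁, h1⟩
      have he₂' : e₂ ∈ G'.edgeSet := (hG'edge e₂).2 ⟨he₂, h2⟩
      rw [hnotS e₁ h1, hnotS e₂ h2]
      exact hc₀prop e₁ he₁' e₂ he₂' hne hshare
end

section
/- Let G be a simple graph, v a vertex of degree 3 whose every neighbor has degree at most 8, and suppose G − v (v and its three incident edges removed) has a proper edge coloring from 9-lists. Then each edge incident to v has at least 2 available colors remaining, and if moreover the three available sets are not all equal of size 2, the coloring extends to G. -/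
lemma sdr3 (A B C : Finset ℕ) (hA : 2 ≤ A.card) (hB : 2 ≤ B.card) (hC : 2 ≤ C.card)
    (h : ¬ (A = B ∧ B = C ∧ A.card = 2)) :
    ∃ a ∈ A, ∃ b ∈ B, ∃ c ∈ C, a ≠ b ∧ a ≠ c ∧ b ≠ c := by
  have herase : ∀ (S : Finset ℕ) (x : ℕ), 2 ≤ S.card → ∃ y ∈ S, y ≠ x := by
    intro S x hS
    obtain ⟨y, hy⟩ := Finset.card_pos.mp
      (by have := Finset.pred_card_le_card_erase (s := S) (a := x); omega : 0 < (S.erase x).card)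
    exact ⟨y, Finset.erase_subset _ _ hy, (Finset.mem_erase.mp hy).1⟩
  by_cases hab : A = B
  · by_cases hbc : B = C
    · have h2 : A.card ≠ 2 := fun h2 => h ⟨hab, hbc, h2⟩
      have h3 : 3 ≤ A.card := by omega
      obtain ⟨S, hS, hScard⟩ := Finset.exists_subset_card_eq h3
      obtain ⟨a, b, c, hab', hac', hbc', rfl⟩ := Finset.card_eq_three.mp hScard
      exact ⟨a, hS (by simp), b, hab ▸ hS (by simp), c, hbc ▸ hab ▸ hS (by simp),
        hab', hac', hbc'⟩
    · by_cases hsub : C ⊆ B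
      · have hlt : C.card < B.card :=
          Finset.card_lt_card (hsub.ssubset_of_ne (fun hh => hbc hh.symm))
        obtain ⟨cc, hcc⟩ := Finset.card_pos.mp (by omega : 0 < C.card)
        have hcB : cc ∈ B := hsub hcc
        have h2 : 1 < (B.erase cc).card := by
          rw [Finset.card_erase_of_mem hcB]; omega
        obtain ⟨a, ha, b, hb, hne⟩ := Finset.one_lt_card.mp h2
        exact ⟨a, hab ▸ Finset.erase_subset _ _ ha, b, Finset.erase_subset _ _ hb, cc, hcc,
          hne, (Finset.mem_erase.mp ha).1, (Finset.mem_erase.mp hb).1⟩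
      · obtain ⟨cc, hccC, hccB⟩ := Finset.not_subset.mp hsub
        obtain ⟨a, ha⟩ := Finset.card_pos.mp (by omega : 0 < A.card)
        obtain ⟨b, hbB, hba⟩ := herase B a hB
        exact ⟨a, ha, b, hbB, cc, hccC, fun hh => hba hh.symm,
          fun hh => hccB (hh ▸ hab ▸ ha), fun hh => hccB (hh ▸ hbB)⟩
  · by_cases hAB : (A \ B).Nonempty
    · obtain ⟨a, haAB⟩ := hAB
      obtain ⟨haA, haB⟩ := Finset.mem_sdiff.mp haAB
      obtain ⟨cc, hccC, hca⟩ := herase C a hC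
      obtain ⟨b, hbB, hbc⟩ := herase B cc hB
      exact ⟨a, haA, b, hbB, cc, hccC, fun hh => haB (hh ▸ hbB), fun hh => hca hh.symm, hbc⟩
    · have hBA : (B \ A).Nonempty := by
        rw [Finset.not_nonempty_iff_eq_empty, Finset.sdiff_eq_empty_iff_subset] at hAB
        rcases Finset.not_subset.mp (fun hh => hab (Finset.Subset.antisymm hAB hh)) with
          ⟨b, hbB, hbA⟩
        exact ⟨b, Finset.mem_sdiff.mpr ⟨hbB, hbA⟩⟩
      obtain ⟨b, hbBA⟩ := hBA
      obtain ⟨hbB, hbA⟩ := Finset.mem_sdiff.mp hbBA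
      obtain ⟨cc, hccC, hcb⟩ := herase C b hC
      obtain ⟨a, haA, hac⟩ := herase A cc hA
      exact ⟨a, haA, b, hbB, cc, hccC, fun hh => hbA (hh ▸ haA), hac, fun hh => hcb hh.symm⟩

/-- Extending a coloring to a degree-3 vertex.  Let `v` have degree 3 with all neighbors of
degree at most 8, let `L` be a 9-list assignment on the edges of `G`, and let `c₀` be a
proper coloring from `L` of `G - v` (i.e. `G` minus the edges incident to `v`).  For an
edge `e` at `v`, its set `avail e` of available colors consists of the colors of `L e` not
used by `c₀` on colored edges incident to `e`.  Then every edge at `v` has at least 2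
available colors, and if the three available sets are not all equal of size 2, the
coloring extends to a proper coloring of `G` from `L` agreeing with `c₀` off `v`. -/
theorem extend_coloring_degree_three_vertex {V : Type*} [Fintype V] (G : SimpleGraph V)
    [DecidableRel G.Adj] (v : V) (hdv : G.degree v = 3)
    (hnbr : ∀ u, G.Adj v u → G.degree u ≤ 8)
    (L : Sym2 V → Finset ℕ) (hL : ∀ e ∈ G.edgeSet, 9 ≤ (L e).card)
    (c₀ : Sym2 V → ℕ)
    (hc₀mem : ∀ e ∈ (G.deleteEdges (G.incidenceSet v)).edgeSet, c₀ e ∈ L e)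
    (hc₀prop : ∀ e₁ ∈ (G.deleteEdges (G.incidenceSet v)).edgeSet,
      ∀ e₂ ∈ (G.deleteEdges (G.incidenceSet v)).edgeSet,
        e₁ ≠ e₂ → (∃ y, y ∈ e₁ ∧ y ∈ e₂) → c₀ e₁ ≠ c₀ e₂)
    (avail : Sym2 V → Set ℕ)
    (havail : ∀ e, avail e = {α | α ∈ L e ∧
      ∀ e' ∈ (G.deleteEdges (G.incidenceSet v)).edgeSet,
        (∃ y, y ∈ e ∧ y ∈ e') → c₀ e' ≠ α}) :
    (∀ u, G.Adj v u → 2 ≤ (avail s(v, u)).ncard) ∧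
    (¬ ((∀ u, G.Adj v u → (avail s(v, u)).ncard = 2) ∧
        (∀ u w, G.Adj v u → G.Adj v w → avail s(v, u) = avail s(v, w))) →
      ∃ c : Sym2 V → ℕ,
        (∀ e ∈ (G.deleteEdges (G.incidenceSet v)).edgeSet, c e = c₀ e) ∧
        (∀ e ∈ G.edgeSet, c e ∈ L e) ∧
        ∀ e₁ ∈ G.edgeSet, ∀ e₂ ∈ G.edgeSet, e₁ ≠ e₂ → (∃ y, y ∈ e₁ ∧ y ∈ e₂) →
          c e₁ ≠ c e₂) := by
  classical
  have hG' : ∀ e, e ∈ (G.deleteEdges (G.incidenceSet v)).edgeSet ↔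
      e ∈ G.edgeSet ∧ v ∉ e := by
    intro e
    rw [SimpleGraph.edgeSet_deleteEdges]
    simp only [Set.mem_diff, SimpleGraph.incidenceSet, Set.mem_sep_iff]
    tauto
  -- the availability sets are finite
  have hfin : ∀ e, (avail e).Finite :=
    fun e => Set.Finite.subset (L e).finite_toSet (by rw [havail]; exact fun α hα => hα.1)
  -- Part 1
  have part1 : ∀ u, G.Adj v u → 2 ≤ (avail s(v, u)).ncard := by
    intro u hu
    set e := s(v, u) with he
    set T : Finset (Sym2 V) := (G.incidenceFinset u).erase e with hT
    have hTcard : T.card ≤ 7 := by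
      have h1 : (G.incidenceFinset u).card = G.degree u := G.card_incidenceFinset_eq_degree u
      have h2 : e ∈ G.incidenceFinset u := by
        rw [SimpleGraph.mem_incidenceFinset]
        exact ⟨hu, Sym2.mem_mk_right v u⟩
      have := hnbr u hu
      rw [hT, Finset.card_erase_of_mem h2]
      omega
    have hsub : (↑(L e \ T.image c₀) : Set ℕ) ⊆ avail e := by
      intro α hα
      simp only [Finset.coe_sdiff, Set.mem_diff, Finset.mem_coe, Finset.mem_image] at hα
      obtain ⟨hαL, hαT⟩ := hα
      rw [havail]
      refine ⟨hαL, fun e' he' hy hc => ?_⟩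
      obtain ⟨y, hy1, hy2⟩ := hy
      obtain ⟨he'G, he'v⟩ := (hG' e').mp he'
      rcases Sym2.mem_iff.mp hy1 with rfl | rfl
      · exact he'v hy2
      refine hαT ⟨e', ?_, hc⟩
      rw [hT, Finset.mem_erase, SimpleGraph.mem_incidenceFinset]
      exact ⟨fun hh => he'v (hh ▸ Sym2.mem_mk_left _ _), he'G, hy2⟩
    have hcard : 2 ≤ (L e \ T.image c₀).card := by
      have h1 := Finset.card_image_le (s := T) (f := c₀)
      have h2 := Finset.le_card_sdiff (T.image c₀) (L e)
      have h3 := hL e (G.mem_edgeSet.mpr hu)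
      omega
    calc (2 : ℕ) ≤ (↑(L e \ T.image c₀) : Set ℕ).ncard := by rwa [Set.ncard_coe_finset]
      _ ≤ (avail e).ncard := Set.ncard_le_ncard hsub (hfin e)
  refine ⟨part1, fun hne => ?_⟩
  -- extract the three neighbors
  have hcard3 : (G.neighborFinset v).card = 3 := by
    rw [G.card_neighborFinset_eq_degree]; exact hdv
  obtain ⟨u₁, u₂, u₃, h12, h13, h23, hset⟩ := Finset.card_eq_three.mp hcard3
  have ha1 : G.Adj v u₁ := by rw [← SimpleGraph.mem_neighborFinset, hset]; simp
  have ha2 : G.Adj v u₂ := by rw [← SimpleGraph.mem_neighborFinset, hset]; simp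
  have ha3 : G.Adj v u₃ := by rw [← SimpleGraph.mem_neighborFinset, hset]; simp
  have hadj_mem : ∀ u, G.Adj v u → u = u₁ ∨ u = u₂ ∨ u = u₃ := by
    intro u hu
    have : u ∈ G.neighborFinset v := by rwa [SimpleGraph.mem_neighborFinset]
    rw [hset] at this; simpa using this
  -- available-set finsets
  set A := (hfin s(v, u₁)).toFinset with hA
  set B := (hfin s(v, u₂)).toFinset with hB
  set C := (hfin s(v, u₃)).toFinset with hC
  have hAcard : A.card = (avail s(v, u₁)).ncard := (Set.ncard_eq_toFinset_card _ _).symm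
  have hBcard : B.card = (avail s(v, u₂)).ncard := (Set.ncard_eq_toFinset_card _ _).symm
  have hCcard : C.card = (avail s(v, u₃)).ncard := (Set.ncard_eq_toFinset_card _ _).symm
  have hsdr : ∃ a ∈ A, ∃ b ∈ B, ∃ c ∈ C, a ≠ b ∧ a ≠ c ∧ b ≠ c := by
    refine sdr3 A B C (hAcard ▸ part1 u₁ ha1) (hBcard ▸ part1 u₂ ha2)
      (hCcard ▸ part1 u₃ ha3) ?_
    rintro ⟨hab, hbc, hc2⟩
    have hABset : avail s(v, u₁) = avail s(v, u₂) := by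
      rwa [hA, hB, Set.Finite.toFinset_inj] at hab
    have hBCset : avail s(v, u₂) = avail s(v, u₃) := by
      rwa [hB, hC, Set.Finite.toFinset_inj] at hbc
    refine hne ⟨fun u hu => ?_, fun u w hu hw => ?_⟩
    · rcases hadj_mem u hu with rfl | rfl | rfl
      · omega
      · rw [← hABset]; omega
      · rw [← hBCset, ← hABset]; omega
    · have key : ∀ u, G.Adj v u → avail s(v, u) = avail s(v, u₁) := by
        intro u hu
        rcases hadj_mem u hu with rfl | rfl | rfl
        · rfl
        · exact hABset.symm
        · rw [← hBCset]; exact hABset.symm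
      rw [key u hu, key w hw]
  obtain ⟨α₁, hα₁, α₂, hα₂, α₃, hα₃, hd12, hd13, hd23⟩ := hsdr
  rw [hA, Set.Finite.mem_toFinset] at hα₁
  rw [hB, Set.Finite.mem_toFinset] at hα₂
  rw [hC, Set.Finite.mem_toFinset] at hα₃
  -- the three edges at v are pairwise distinct
  have hEne : ∀ a b : V, v ≠ b → a ≠ b → s(v, a) ≠ s(v, b) := by
    intro a b hvb hab hh
    rcases Sym2.eq_iff.mp hh with ⟨-, h⟩ | ⟨h, -⟩
    · exact hab h
    · exact hvb h
  have hE12 : s(v, u₁) ≠ s(v, u₂) := hEne u₁ u₂ ha2.ne h12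
  have hE13 : s(v, u₁) ≠ s(v, u₃) := hEne u₁ u₃ ha3.ne h13
  have hE23 : s(v, u₂) ≠ s(v, u₃) := hEne u₂ u₃ ha3.ne h23
  -- the extended coloring
  set c : Sym2 V → ℕ := fun e =>
    if e = s(v, u₁) then α₁ else if e = s(v, u₂) then α₂ else
      if e = s(v, u₃) then α₃ else c₀ e with hcdef
  have hcv1 : c s(v, u₁) = α₁ := by simp [hcdef]
  have hcv2 : c s(v, u₂) = α₂ := by simp [hcdef, hE12.symm, Ne.symm hE12]
  have hcv3 : c s(v, u₃) = α₃ := by simp [hcdef, Ne.symm hE13, Ne.symm hE23]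
  have hc0 : ∀ e ∈ (G.deleteEdges (G.incidenceSet v)).edgeSet, c e = c₀ e := by
    intro e he
    have hv : v ∉ e := ((hG' e).mp he).2
    have hne1 : e ≠ s(v, u₁) := fun hh => hv (hh ▸ Sym2.mem_mk_left _ _)
    have hne2 : e ≠ s(v, u₂) := fun hh => hv (hh ▸ Sym2.mem_mk_left _ _)
    have hne3 : e ≠ s(v, u₃) := fun hh => hv (hh ▸ Sym2.mem_mk_left _ _)
    simp [hcdef, hne1, hne2, hne3]
  -- classification of edges of G
  have hclass : ∀ e ∈ G.edgeSet, e ∈ (G.deleteEdges (G.incidenceSet v)).edgeSet ∨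
      e = s(v, u₁) ∨ e = s(v, u₂) ∨ e = s(v, u₃) := by
    intro e he
    by_cases hv : v ∈ e
    · right
      obtain ⟨w, rfl⟩ := Sym2.mem_iff_exists.mp hv
      have hw : G.Adj v w := G.mem_edgeSet.mp he
      rcases hadj_mem w hw with rfl | rfl | rfl
      · exact Or.inl rfl
      · exact Or.inr (Or.inl rfl)
      · exact Or.inr (Or.inr rfl)
    · exact Or.inl ((hG' e).mpr ⟨he, hv⟩)
  -- availability implies non-conflict with c₀
  have havprop : ∀ (u : V) (α : ℕ), α ∈ avail s(v, u) →
      ∀ e' ∈ (G.deleteEdges (G.incidenceSet v)).edgeSet,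
        (∃ y, y ∈ s(v, u) ∧ y ∈ e') → c₀ e' ≠ α := by
    intro u α hα
    rw [havail] at hα
    exact hα.2
  have havL : ∀ (u : V) (α : ℕ), α ∈ avail s(v, u) → α ∈ L s(v, u) := by
    intro u α hα
    rw [havail] at hα
    exact hα.1
  refine ⟨c, hc0, ?_, ?_⟩
  · intro e he
    rcases hclass e he with h | rfl | rfl | rfl
    · rw [hc0 e h]; exact hc₀mem e h
    · rw [hcv1]; exact havL u₁ α₁ hα₁
    · rw [hcv2]; exact havL u₂ α₂ hα₂
    · rw [hcv3]; exact havL u₃ α₃ hα₃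
  · intro e₁ he₁ e₂ he₂ hne' hy
    have hswap : ∃ y, y ∈ e₂ ∧ y ∈ e₁ := by
      obtain ⟨y, hy1, hy2⟩ := hy; exact ⟨y, hy2, hy1⟩
    rcases hclass e₁ he₁ with h1 | rfl | rfl | rfl <;>
      rcases hclass e₂ he₂ with h2 | rfl | rfl | rfl
    · rw [hc0 e₁ h1, hc0 e₂ h2]; exact hc₀prop e₁ h1 e₂ h2 hne' hy
    · rw [hc0 e₁ h1, hcv1]; exact havprop u₁ α₁ hα₁ e₁ h1 hswap
    · rw [hc0 e₁ h1, hcv2]; exact havprop u₂ α₂ hα₂ e₁ h1 hswap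
    · rw [hc0 e₁ h1, hcv3]; exact havprop u₃ α₃ hα₃ e₁ h1 hswap
    · rw [hc0 e₂ h2, hcv1]; exact (havprop u₁ α₁ hα₁ e₂ h2 hy).symm
    · exact absurd rfl hne'
    · rw [hcv1, hcv2]; exact hd12
    · rw [hcv1, hcv3]; exact hd13
    · rw [hc0 e₂ h2, hcv2]; exact (havprop u₂ α₂ hα₂ e₂ h2 hy).symm
    · rw [hcv2, hcv1]; exact hd12.symm
    · exact absurd rfl hne'
    · rw [hcv2, hcv3]; exact hd23
    · rw [hc0 e₂ h2, hcv3]; exact (havprop u₃ α₃ hα₃ e₂ h2 hy).symm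
    · rw [hcv3, hcv1]; exact hd13.symm
    · rw [hcv3, hcv2]; exact hd23.symm
    · exact absurd rfl hne'
end
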